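/- arXiv:1512.02113 — 2 statements merged into one kernel-verified Lean document; each statement's English description precedes it below -/
import Mathlib

section
/- Let φ and ψ be unit vectors in ℂ² with ⟨ψ, φ⟩ ≠ 0, let I be the 2×2 identity matrix, and set P_{φ,ψ} := (1/2)(|φ⟩⟨φ| + |ψ⟩⟨ψ| − I). Then for all real numbers s and t, the weak value W_{φ,ψ}(s·P_{φ,ψ} + t·(|φ⟩⟨φ| − |ψ⟩⟨ψ|)) equals s/2. That is, each line K_{φ,ψ}(s) in the PPS plane parallel to the direction |φ⟩⟨φ| − |ψ⟩⟨ψ| and passing through s·P_{φ,ψ} is mapped entirely to the single weak value s/2. -/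
noncomputable section

/-- The rank-one projector `|v⟩⟨v|` with entries `v i * conj (v j)`. -/
def proj (v : EuclideanSpace ℂ (Fin 2)) : Matrix (Fin 2) (Fin 2) ℂ :=
  Matrix.of fun i j => v i * star (v j)

/-- Matrix-vector multiplication, valued in `EuclideanSpace ℂ (Fin 2)`. -/
def mulVecE (M : Matrix (Fin 2) (Fin 2) ℂ) (v : EuclideanSpace ℂ (Fin 2)) :
    EuclideanSpace ℂ (Fin 2) :=
  (WithLp.equiv 2 (Fin 2 → ℂ)).symm (M.mulVec ((WithLp.equiv 2 (Fin 2 → ℂ)) v))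

/-- The weak value `W_{φ,ψ}(M) = ⟨ψ, Mφ⟩ / ⟨ψ, φ⟩`. -/
def weak (φ ψ : EuclideanSpace ℂ (Fin 2)) (M : Matrix (Fin 2) (Fin 2) ℂ) : ℂ :=
  (inner ℂ ψ (mulVecE M φ) : ℂ) / (inner ℂ ψ φ : ℂ)

/-! The weak value `W_{φ,ψ}` is linear in the observable and equals `1` on `I`, `|φ⟩⟨φ|` and
`|ψ⟩⟨ψ|` (the pre-selected state is fixed by `|φ⟩⟨φ|`, the post-selected one by `|ψ⟩⟨ψ|`).
Hence `W(P_{φ,ψ}) = 1/2` and `W(|φ⟩⟨φ| - |ψ⟩⟨ψ|) = 0`. -/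

open Matrix InnerProductSpace

theorem mulVecE_eq_toEuclideanLin (M : Matrix (Fin 2) (Fin 2) ℂ) (v : EuclideanSpace ℂ (Fin 2)) :
    mulVecE M v = toEuclideanLin M v := rfl

theorem proj_eq_symm_toEuclideanLin_rankOne (v : EuclideanSpace ℂ (Fin 2)) :
    proj v = toEuclideanLin.symm (rankOne ℂ v v) := by
  rw [symm_toEuclideanLin_rankOne]; rfl

theorem mulVecE_proj (v w : EuclideanSpace ℂ (Fin 2)) :
    mulVecE (proj v) w = inner ℂ v w • v := by
  rw [mulVecE_eq_toEuclideanLin, proj_eq_symm_toEuclideanLin_rankOne,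
    LinearEquiv.apply_symm_apply]
  rfl

section weak
variable (φ ψ : EuclideanSpace ℂ (Fin 2))

theorem weak_add (M N : Matrix (Fin 2) (Fin 2) ℂ) :
    weak φ ψ (M + N) = weak φ ψ M + weak φ ψ N := by
  simp only [weak, mulVecE_eq_toEuclideanLin, map_add, LinearMap.add_apply, inner_add_right,
    add_div]

theorem weak_sub (M N : Matrix (Fin 2) (Fin 2) ℂ) :
    weak φ ψ (M - N) = weak φ ψ M - weak φ ψ N := by
  simp only [weak, mulVecE_eq_toEuclideanLin, map_sub, LinearMap.sub_apply, inner_sub_right,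
    sub_div]

theorem weak_smul (c : ℂ) (M : Matrix (Fin 2) (Fin 2) ℂ) :
    weak φ ψ (c • M) = c * weak φ ψ M := by
  simp only [weak, mulVecE_eq_toEuclideanLin, map_smul, LinearMap.smul_apply, inner_smul_right,
    mul_div_assoc]

variable {φ ψ}

theorem weak_one (h : inner ℂ ψ φ ≠ 0) : weak φ ψ 1 = 1 := by
  simp [weak, mulVecE_eq_toEuclideanLin, h]

theorem weak_proj_left (hφ : ‖φ‖ = 1) (h : inner ℂ ψ φ ≠ 0) : weak φ ψ (proj φ) = 1 := by
  rw [weak, mulVecE_proj, inner_smul_right, inner_self_eq_norm_sq_to_K, hφ]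
  simp [h]

theorem weak_proj_right (hψ : ‖ψ‖ = 1) (h : inner ℂ ψ φ ≠ 0) : weak φ ψ (proj ψ) = 1 := by
  rw [weak, mulVecE_proj, inner_smul_right, inner_self_eq_norm_sq_to_K, hψ]
  simp [h]

end weak

/-- with `P_{φ,ψ} = (1/2)(|φ⟩⟨φ| + |ψ⟩⟨ψ| - I)`, every point of the line
`K_{φ,ψ}(s)` through `s • P_{φ,ψ}` in direction `|φ⟩⟨φ| - |ψ⟩⟨ψ|` has weak value `s/2`. -/
theorem stmt5 (φ ψ : EuclideanSpace ℂ (Fin 2))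
    (hφ : ‖φ‖ = 1) (hψ : ‖ψ‖ = 1) (hno : (inner ℂ ψ φ : ℂ) ≠ 0)
    (P : Matrix (Fin 2) (Fin 2) ℂ)
    (hP : P = (1 / 2 : ℂ) • (proj φ + proj ψ - (1 : Matrix (Fin 2) (Fin 2) ℂ)))
    (s t : ℝ) :
    weak φ ψ ((s : ℂ) • P + (t : ℂ) • (proj φ - proj ψ)) = (s : ℂ) / 2 := by
  rw [hP, weak_add, weak_smul, weak_smul, weak_smul, weak_sub, weak_sub, weak_add,
    weak_proj_left hφ hno, weak_proj_right hψ hno, weak_one hno]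
  ring
end
end

section
/- Let γ and γ⊥ be orthonormal vectors in ℂ², let θ ∈ ℝ, and set φ = (γ + e^{iθ}γ⊥)/√2 and ψ = (γ + e^{i(θ+π/2)}γ⊥)/√2 (so that φ and ψ are mutually unbiased with ω = π/2). Let φ⊥ be a unit vector orthogonal to φ, let p ∈ [0,1], and set ρ := (1−p)|φ⟩⟨φ| + p|φ⊥⟩⟨φ⊥|. Then the generalized weak values satisfy W_{ρ,ψ}(|γ⟩⟨γ|) = (1/2)(1 + (1−2p)i) and W_{ρ,ψ}(|γ⊥⟩⟨γ⊥|) = (1/2)(1 − (1−2p)i); in particular W_{ρ,ψ}(|γ⊥⟩⟨γ⊥|) is the complex conjugate of W_{ρ,ψ}(|γ⟩⟨γ|). -/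
/-! Since `φ, φ⊥` is an orthonormal basis of `ℂ²`, the state is `ρ = p • 1 + (1 - 2p) |φ⟩⟨φ|`, so
every trace in the generalized weak value is a product of inner products. In the basis `γ, γ⊥`
the vectors `φ` and `ψ` have coordinates `(1, e^{iθ})/√2` and `(1, i e^{iθ})/√2`, whence
`⟨ψ, φ⟩ = (1 - i)/2` and the denominator `Tr(|ψ⟩⟨ψ| ρ)` equals `1/2` for every `p`. -/

noncomputable section

/-- The generalized weak value `W_{ρ,ψ}(M) = Tr(|ψ⟩⟨ψ| M ρ) / Tr(|ψ⟩⟨ψ| ρ)`. -/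
def gweak (ρ : Matrix (Fin 2) (Fin 2) ℂ) (ψ : EuclideanSpace ℂ (Fin 2))
    (M : Matrix (Fin 2) (Fin 2) ℂ) : ℂ :=
  (proj ψ * M * ρ).trace / (proj ψ * ρ).trace

open ComplexConjugate
open scoped InnerProductSpace Matrix

theorem Orthonormal.sum_vecMulVec_star_eq_one {𝕜 ι : Type*} [RCLike 𝕜] [Fintype ι]
    [DecidableEq ι] {b : ι → EuclideanSpace 𝕜 ι} (hb : Orthonormal 𝕜 b) :
    ∑ k, Matrix.vecMulVec (b k) (star (b k)) = 1 := by
  set A : Matrix ι ι 𝕜 := Matrix.of fun i k => b k i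
  have hA : Aᴴ * A = 1 := by
    ext k l
    rw [Matrix.one_apply, ← orthonormal_iff_ite.mp hb k l]
    simp [A, Matrix.mul_apply, PiLp.inner_apply, mul_comm]
  rw [← mul_eq_one_comm.mp hA]
  ext i j
  simp [A, Matrix.mul_apply, Matrix.sum_apply, Matrix.vecMulVec_apply]

lemma proj_eq_vecMulVec (v : EuclideanSpace ℂ (Fin 2)) :
    proj v = Matrix.vecMulVec v (star v) :=
  rfl

lemma proj_add_proj_eq_one {u v : EuclideanSpace ℂ (Fin 2)} (hu : ‖u‖ = 1) (hv : ‖v‖ = 1)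
    (huv : ⟪u, v⟫_ℂ = 0) : proj u + proj v = 1 := by
  have hb : Orthonormal ℂ ![u, v] := by
    rw [orthonormal_iff_ite]
    intro i j
    fin_cases i <;> fin_cases j <;> simp [hu, hv, huv, inner_eq_zero_symm.mp huv]
  simpa [Fin.sum_univ_two, proj_eq_vecMulVec] using hb.sum_vecMulVec_star_eq_one

lemma trace_proj (a : EuclideanSpace ℂ (Fin 2)) : (proj a).trace = ⟪a, a⟫_ℂ := by
  simp only [proj, Matrix.trace, Matrix.diag, Matrix.of_apply, Fin.sum_univ_two,
    PiLp.inner_apply, RCLike.inner_apply, starRingEnd_apply]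

lemma trace_proj_mul_proj (a b : EuclideanSpace ℂ (Fin 2)) :
    (proj a * proj b).trace = ⟪a, b⟫_ℂ * ⟪b, a⟫_ℂ := by
  simp only [proj, Matrix.trace, Matrix.diag_apply, Matrix.mul_apply, Matrix.of_apply,
    Fin.sum_univ_two, PiLp.inner_apply, RCLike.inner_apply, starRingEnd_apply]
  ring

lemma trace_proj_mul_proj_mul_proj (a b c : EuclideanSpace ℂ (Fin 2)) :
    (proj a * proj b * proj c).trace = ⟪a, b⟫_ℂ * ⟪b, c⟫_ℂ * ⟪c, a⟫_ℂ := by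
  simp only [proj, Matrix.trace, Matrix.diag_apply, Matrix.mul_apply, Matrix.of_apply,
    Fin.sum_univ_two, PiLp.inner_apply, RCLike.inner_apply, starRingEnd_apply]
  ring

def depolarized (φ φperp : EuclideanSpace ℂ (Fin 2)) (p : ℝ) : Matrix (Fin 2) (Fin 2) ℂ :=
  ((1 - p : ℝ) : ℂ) • proj φ + ((p : ℝ) : ℂ) • proj φperp

lemma depolarized_eq_smul_one_add {φ φperp : EuclideanSpace ℂ (Fin 2)} (hφ : ‖φ‖ = 1)
    (hφperp : ‖φperp‖ = 1) (horth : ⟪φ, φperp⟫_ℂ = 0) (p : ℝ) :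
    depolarized φ φperp p = (p : ℂ) • 1 + (1 - 2 * p : ℂ) • proj φ := by
  rw [depolarized, ← proj_add_proj_eq_one hφ hφperp horth]
  push_cast
  module

lemma gweak_depolarized_proj {φ φperp : EuclideanSpace ℂ (Fin 2)} (hφ : ‖φ‖ = 1)
    (hφperp : ‖φperp‖ = 1) (horth : ⟪φ, φperp⟫_ℂ = 0) (p : ℝ)
    (ψ γ : EuclideanSpace ℂ (Fin 2)) :
    gweak (depolarized φ φperp p) ψ (proj γ) =
      (p * (⟪ψ, γ⟫_ℂ * ⟪γ, ψ⟫_ℂ) + (1 - 2 * p) * (⟪ψ, γ⟫_ℂ * ⟪γ, φ⟫_ℂ * ⟪φ, ψ⟫_ℂ)) /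
        (p * ⟪ψ, ψ⟫_ℂ + (1 - 2 * p) * (⟪ψ, φ⟫_ℂ * ⟪φ, ψ⟫_ℂ)) := by
  simp only [gweak, depolarized_eq_smul_one_add hφ hφperp horth, Matrix.mul_add,
    Matrix.mul_smul, mul_one, Matrix.trace_add, Matrix.trace_smul, smul_eq_mul, trace_proj,
    trace_proj_mul_proj, trace_proj_mul_proj_mul_proj]

lemma inv_sqrt_two_mul_inv_sqrt_two : (Real.sqrt 2 : ℂ)⁻¹ * (Real.sqrt 2 : ℂ)⁻¹ = 1 / 2 := by
  rw [← mul_inv, ← Complex.ofReal_mul, Real.mul_self_sqrt zero_le_two]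
  norm_num

section EvenSuperposition

variable {E : Type*} [NormedAddCommGroup E] [InnerProductSpace ℂ E] {u v : E}

def evenSuperposition (u v : E) (z : ℂ) : E :=
  (Real.sqrt 2 : ℂ)⁻¹ • (u + z • v)

lemma inner_fst_evenSuperposition (hu : ‖u‖ = 1) (huv : ⟪u, v⟫_ℂ = 0) (z : ℂ) :
    ⟪u, evenSuperposition u v z⟫_ℂ = (Real.sqrt 2 : ℂ)⁻¹ := by
  simp [evenSuperposition, hu, huv]

lemma inner_snd_evenSuperposition (hv : ‖v‖ = 1) (huv : ⟪u, v⟫_ℂ = 0) (z : ℂ) :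
    ⟪v, evenSuperposition u v z⟫_ℂ = (Real.sqrt 2 : ℂ)⁻¹ * z := by
  simp [evenSuperposition, hv, inner_eq_zero_symm.mp huv]

lemma inner_evenSuperposition_fst (hu : ‖u‖ = 1) (huv : ⟪u, v⟫_ℂ = 0) (z : ℂ) :
    ⟪evenSuperposition u v z, u⟫_ℂ = (Real.sqrt 2 : ℂ)⁻¹ := by
  rw [← inner_conj_symm, inner_fst_evenSuperposition hu huv, map_inv₀, Complex.conj_ofReal]

lemma inner_evenSuperposition_snd (hv : ‖v‖ = 1) (huv : ⟪u, v⟫_ℂ = 0) (z : ℂ) :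
    ⟪evenSuperposition u v z, v⟫_ℂ = (Real.sqrt 2 : ℂ)⁻¹ * conj z := by
  rw [← inner_conj_symm, inner_snd_evenSuperposition hv huv, map_mul, map_inv₀,
    Complex.conj_ofReal]

lemma inner_evenSuperposition_evenSuperposition (hu : ‖u‖ = 1) (hv : ‖v‖ = 1)
    (huv : ⟪u, v⟫_ℂ = 0) (z w : ℂ) :
    ⟪evenSuperposition u v z, evenSuperposition u v w⟫_ℂ = (1 + conj z * w) / 2 := by
  simp only [evenSuperposition, inner_smul_left, inner_smul_right, inner_add_left,
    inner_add_right, inner_self_eq_norm_sq_to_K, hu, hv, huv, inner_eq_zero_symm.mp huv, map_inv₀,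
    Complex.conj_ofReal, RCLike.ofReal_one, one_pow]
  linear_combination (1 + conj z * w) * inv_sqrt_two_mul_inv_sqrt_two

lemma inner_evenSuperposition_self (hu : ‖u‖ = 1) (hv : ‖v‖ = 1) (huv : ⟪u, v⟫_ℂ = 0)
    {z : ℂ} (hz : ‖z‖ = 1) : ⟪evenSuperposition u v z, evenSuperposition u v z⟫_ℂ = 1 := by
  rw [inner_evenSuperposition_evenSuperposition hu hv huv, Complex.conj_mul', hz]
  norm_num

lemma norm_evenSuperposition (hu : ‖u‖ = 1) (hv : ‖v‖ = 1) (huv : ⟪u, v⟫_ℂ = 0)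
    {z : ℂ} (hz : ‖z‖ = 1) : ‖evenSuperposition u v z‖ = 1 := by
  refine (pow_eq_one_iff_of_nonneg (norm_nonneg _) two_ne_zero).mp ?_
  rw [← inner_self_eq_norm_sq (𝕜 := ℂ), inner_evenSuperposition_self hu hv huv hz]
  norm_num

lemma inner_evenSuperposition_I_mul (hu : ‖u‖ = 1) (hv : ‖v‖ = 1) (huv : ⟪u, v⟫_ℂ = 0)
    {z : ℂ} (hz : ‖z‖ = 1) :
    ⟪evenSuperposition u v z, evenSuperposition u v (Complex.I * z)⟫_ℂ = (1 + Complex.I) / 2 := by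
  rw [inner_evenSuperposition_evenSuperposition hu hv huv, mul_left_comm, Complex.conj_mul', hz]
  norm_num

lemma inner_I_mul_evenSuperposition (hu : ‖u‖ = 1) (hv : ‖v‖ = 1) (huv : ⟪u, v⟫_ℂ = 0)
    {z : ℂ} (hz : ‖z‖ = 1) :
    ⟪evenSuperposition u v (Complex.I * z), evenSuperposition u v z⟫_ℂ = (1 - Complex.I) / 2 := by
  rw [← inner_conj_symm, inner_evenSuperposition_I_mul hu hv huv hz, map_div₀, map_add, map_one,
    Complex.conj_I, map_ofNat]
  ring

end EvenSuperposition

section MutuallyUnbiased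

variable {γ γperp φperp : EuclideanSpace ℂ (Fin 2)} {e : ℂ}

lemma gweak_depolarized_evenSuperposition (hγ : ‖γ‖ = 1) (hγp : ‖γperp‖ = 1)
    (horth : ⟪γ, γperp⟫_ℂ = 0) (he : ‖e‖ = 1) (hφperp : ‖φperp‖ = 1)
    (horth' : ⟪evenSuperposition γ γperp e, φperp⟫_ℂ = 0) (p : ℝ)
    (x : EuclideanSpace ℂ (Fin 2)) :
    gweak (depolarized (evenSuperposition γ γperp e) φperp p)
        (evenSuperposition γ γperp (Complex.I * e)) (proj x) =
      2 * (p * (⟪evenSuperposition γ γperp (Complex.I * e), x⟫_ℂ *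
          ⟪x, evenSuperposition γ γperp (Complex.I * e)⟫_ℂ) +
        (1 - 2 * p) * (⟪evenSuperposition γ γperp (Complex.I * e), x⟫_ℂ *
          ⟪x, evenSuperposition γ γperp e⟫_ℂ * ((1 + Complex.I) / 2))) := by
  have hie : ‖Complex.I * e‖ = 1 := by rw [norm_mul, Complex.norm_I, he, one_mul]
  have hden : (p : ℂ) * 1 + (1 - 2 * p) * ((1 - Complex.I) / 2 * ((1 + Complex.I) / 2)) =
      1 / 2 := by
    linear_combination (-(1 - 2 * p) / 4 : ℂ) * Complex.I_sq
  rw [gweak_depolarized_proj (norm_evenSuperposition hγ hγp horth he) hφperp horth',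
    inner_evenSuperposition_self hγ hγp horth hie, inner_I_mul_evenSuperposition hγ hγp horth he,
    inner_evenSuperposition_I_mul hγ hγp horth he, hden]
  ring

lemma gweak_depolarized_evenSuperposition_proj_fst (hγ : ‖γ‖ = 1) (hγp : ‖γperp‖ = 1)
    (horth : ⟪γ, γperp⟫_ℂ = 0) (he : ‖e‖ = 1) (hφperp : ‖φperp‖ = 1)
    (horth' : ⟪evenSuperposition γ γperp e, φperp⟫_ℂ = 0) (p : ℝ) :
    gweak (depolarized (evenSuperposition γ γperp e) φperp p)
        (evenSuperposition γ γperp (Complex.I * e)) (proj γ) =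
      1 / 2 * (1 + ((1 - 2 * p : ℝ) : ℂ) * Complex.I) := by
  rw [gweak_depolarized_evenSuperposition hγ hγp horth he hφperp horth',
    inner_evenSuperposition_fst hγ horth, inner_fst_evenSuperposition hγ horth,
    inner_fst_evenSuperposition hγ horth]
  push_cast
  linear_combination (2 * p + (1 - 2 * p) * (1 + Complex.I)) * inv_sqrt_two_mul_inv_sqrt_two

lemma gweak_depolarized_evenSuperposition_proj_snd (hγ : ‖γ‖ = 1) (hγp : ‖γperp‖ = 1)
    (horth : ⟪γ, γperp⟫_ℂ = 0) (he : ‖e‖ = 1) (hφperp : ‖φperp‖ = 1)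
    (horth' : ⟪evenSuperposition γ γperp e, φperp⟫_ℂ = 0) (p : ℝ) :
    gweak (depolarized (evenSuperposition γ γperp e) φperp p)
        (evenSuperposition γ γperp (Complex.I * e)) (proj γperp) =
      1 / 2 * (1 - ((1 - 2 * p : ℝ) : ℂ) * Complex.I) := by
  have hconj : conj e * e = 1 := by rw [Complex.conj_mul', he]; norm_num
  rw [gweak_depolarized_evenSuperposition hγ hγp horth he hφperp horth',
    inner_evenSuperposition_snd hγp horth, inner_snd_evenSuperposition hγp horth,
    inner_snd_evenSuperposition hγp horth, map_mul, Complex.conj_I]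
  push_cast
  set σ : ℂ := (Real.sqrt 2 : ℂ)⁻¹ * (Real.sqrt 2 : ℂ)⁻¹
  set A : ℂ := -2 * p * Complex.I ^ 2 - (1 - 2 * p) * (Complex.I + Complex.I ^ 2)
  linear_combination
    (A * σ) * hconj + A * inv_sqrt_two_mul_inv_sqrt_two - (1 / 2 : ℂ) * Complex.I_sq

end MutuallyUnbiased

theorem stmt14_general (γ γperp : EuclideanSpace ℂ (Fin 2))
    (hγ : ‖γ‖ = 1) (hγp : ‖γperp‖ = 1) (horth : (inner ℂ γ γperp : ℂ) = 0)
    (θ : ℝ)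
    (φ ψ : EuclideanSpace ℂ (Fin 2))
    (hφ : φ = (Real.sqrt 2 : ℂ)⁻¹ • (γ + Complex.exp (θ * Complex.I) • γperp))
    (hψ : ψ = (Real.sqrt 2 : ℂ)⁻¹ •
        (γ + Complex.exp ((θ + Real.pi / 2) * Complex.I) • γperp))
    (φperp : EuclideanSpace ℂ (Fin 2))
    (hφperp : ‖φperp‖ = 1) (horth' : (inner ℂ φ φperp : ℂ) = 0)
    (p : ℝ)
    (ρ : Matrix (Fin 2) (Fin 2) ℂ)
    (hρ : ρ = ((1 - p : ℝ) : ℂ) • proj φ + ((p : ℝ) : ℂ) • proj φperp) :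
    gweak ρ ψ (proj γ) = (1 / 2) * (1 + ((1 - 2 * p : ℝ) : ℂ) * Complex.I) ∧
      gweak ρ ψ (proj γperp) = (1 / 2) * (1 - ((1 - 2 * p : ℝ) : ℂ) * Complex.I) ∧
      gweak ρ ψ (proj γperp) = starRingEnd ℂ (gweak ρ ψ (proj γ)) := by
  set e := Complex.exp (θ * Complex.I)
  have he : ‖e‖ = 1 := Complex.norm_exp_ofReal_mul_I θ
  obtain rfl : φ = evenSuperposition γ γperp e := hφ
  obtain rfl : ψ = evenSuperposition γ γperp (Complex.I * e) := by
    rw [hψ, add_mul, Complex.exp_add, Complex.exp_pi_div_two_mul_I, mul_comm]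
    rfl
  obtain rfl : ρ = depolarized (evenSuperposition γ γperp e) φperp p := hρ
  rw [gweak_depolarized_evenSuperposition_proj_fst hγ hγp horth he hφperp horth',
    gweak_depolarized_evenSuperposition_proj_snd hγ hγp horth he hφperp horth']
  refine ⟨rfl, rfl, ?_⟩
  simp only [map_mul, map_add, map_one, map_div₀, map_ofNat, Complex.conj_ofReal,
    Complex.conj_I]
  ring

/-- for mutually unbiased pre- and post-selection (ω = π/2) and
depolarized pre-selection `ρ`, `W_{ρ,ψ}(|γ⟩⟨γ|) = (1/2)(1 + (1-2p)i)` and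
`W_{ρ,ψ}(|γ⊥⟩⟨γ⊥|) = (1/2)(1 - (1-2p)i)` is its complex conjugate. -/
theorem stmt14 (γ γperp : EuclideanSpace ℂ (Fin 2))
    (hγ : ‖γ‖ = 1) (hγp : ‖γperp‖ = 1) (horth : (inner ℂ γ γperp : ℂ) = 0)
    (θ : ℝ)
    (φ ψ : EuclideanSpace ℂ (Fin 2))
    (hφ : φ = (Real.sqrt 2 : ℂ)⁻¹ • (γ + Complex.exp (θ * Complex.I) • γperp))
    (hψ : ψ = (Real.sqrt 2 : ℂ)⁻¹ •
        (γ + Complex.exp ((θ + Real.pi / 2) * Complex.I) • γperp))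
    (φperp : EuclideanSpace ℂ (Fin 2))
    (hφperp : ‖φperp‖ = 1) (horth' : (inner ℂ φ φperp : ℂ) = 0)
    (p : ℝ) (hp : p ∈ Set.Icc (0 : ℝ) 1)
    (ρ : Matrix (Fin 2) (Fin 2) ℂ)
    (hρ : ρ = ((1 - p : ℝ) : ℂ) • proj φ + ((p : ℝ) : ℂ) • proj φperp) :
    gweak ρ ψ (proj γ) = (1 / 2) * (1 + ((1 - 2 * p : ℝ) : ℂ) * Complex.I) ∧
      gweak ρ ψ (proj γperp) = (1 / 2) * (1 - ((1 - 2 * p : ℝ) : ℂ) * Complex.I) ∧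
      gweak ρ ψ (proj γperp) = starRingEnd ℂ (gweak ρ ψ (proj γ)) :=
  stmt14_general γ γperp hγ hγp horth θ φ ψ hφ hψ φperp hφperp horth' p ρ hρ
end
end
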